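/- Let A, B ∈ ℝ with A² + B² = 1 and define the unitary automorphism U_{A,B} : ℝ³ → ℝ³ by U_{A,B}(p,q,s) = (Ap − Bq, Bp + Aq, s + (1/2)(AB(p² − q²) + (A² − B² − 1)pq)). Then for every α ∈ ℝ and every smooth function f : ℝ³ → ℂ, one has ℒ_α(f ∘ U_{A,B}) = (ℒ_α f) ∘ U_{A,B}. -/

import Mathlib

noncomputable section

abbrev H3 := ℝ × ℝ × ℝ

/-- P f = ∂f/∂p -/
def Pd (f : H3 → ℂ) : H3 → ℂ := fun x => deriv (fun p => f (p, x.2.1, x.2.2)) x.1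

/-- S f = ∂f/∂s -/
def Sd (f : H3 → ℂ) : H3 → ℂ := fun x => deriv (fun s => f (x.1, x.2.1, s)) x.2.2

/-- Q f = ∂f/∂q + p ∂f/∂s -/
def Qd (f : H3 → ℂ) : H3 → ℂ := fun x =>
  deriv (fun q => f (x.1, q, x.2.2)) x.2.1 + (x.1 : ℂ) * Sd f x

/-- Folland–Stein operator ℒ_α f = (1/4)(−(P²f + Q²f) + iα Sf) -/
def FS (α : ℝ) (f : H3 → ℂ) : H3 → ℂ := fun x =>
  (1 / 4 : ℂ) * (-(Pd (Pd f) x + Qd (Qd f) x) + Complex.I * (α : ℂ) * Sd f x)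

/-- the unitary automorphism U_{A,B} -/
def Uab (A B : ℝ) : H3 → H3 := fun x =>
  (A * x.1 - B * x.2.1, B * x.1 + A * x.2.1,
    x.2.2 + (1 / 2) * (A * B * (x.1 ^ 2 - x.2.1 ^ 2) + (A ^ 2 - B ^ 2 - 1) * x.1 * x.2.1))

/- ### Auxiliary lemmas -/

lemma hasDerivAt_sec1 (g : H3 → ℂ) (hg : Differentiable ℝ g) (a b t : ℝ) :
    HasDerivAt (fun p => g (p, a, b)) (fderiv ℝ g (t, a, b) (1, 0, 0)) t := by
  have hc : HasDerivAt (fun p : ℝ => ((p, a, b) : H3)) ((1:ℝ), (0:ℝ), (0:ℝ)) t :=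
    (hasDerivAt_id t).prodMk ((hasDerivAt_const t a).prodMk (hasDerivAt_const t b))
  exact (hg (t, a, b)).hasFDerivAt.comp_hasDerivAt t hc

lemma hasDerivAt_sec2 (g : H3 → ℂ) (hg : Differentiable ℝ g) (a b t : ℝ) :
    HasDerivAt (fun q => g (a, q, b)) (fderiv ℝ g (a, t, b) (0, 1, 0)) t := by
  have hc : HasDerivAt (fun q : ℝ => ((a, q, b) : H3)) ((0:ℝ), (1:ℝ), (0:ℝ)) t :=
    (hasDerivAt_const t a).prodMk ((hasDerivAt_id t).prodMk (hasDerivAt_const t b))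
  exact (hg (a, t, b)).hasFDerivAt.comp_hasDerivAt t hc

lemma hasDerivAt_sec3 (g : H3 → ℂ) (hg : Differentiable ℝ g) (a b t : ℝ) :
    HasDerivAt (fun s => g (a, b, s)) (fderiv ℝ g (a, b, t) (0, 0, 1)) t := by
  have hc : HasDerivAt (fun s : ℝ => ((a, b, s) : H3)) ((0:ℝ), (0:ℝ), (1:ℝ)) t :=
    (hasDerivAt_const t a).prodMk ((hasDerivAt_const t b).prodMk (hasDerivAt_id t))
  exact (hg (a, b, t)).hasFDerivAt.comp_hasDerivAt t hc

lemma Pd_eq (g : H3 → ℂ) (hg : Differentiable ℝ g) (x : H3) :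
    Pd g x = fderiv ℝ g x (1, 0, 0) := by
  have := (hasDerivAt_sec1 g hg x.2.1 x.2.2 x.1).deriv
  simpa [Pd] using this

lemma Sd_eq (g : H3 → ℂ) (hg : Differentiable ℝ g) (x : H3) :
    Sd g x = fderiv ℝ g x (0, 0, 1) := by
  have := (hasDerivAt_sec3 g hg x.1 x.2.1 x.2.2).deriv
  simpa [Sd] using this

lemma Qd_eq (g : H3 → ℂ) (hg : Differentiable ℝ g) (x : H3) :
    Qd g x = fderiv ℝ g x (0, 1, 0) + (x.1 : ℂ) * fderiv ℝ g x (0, 0, 1) := by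
  have := (hasDerivAt_sec2 g hg x.1 x.2.2 x.2.1).deriv
  rw [Qd, Sd_eq g hg x]
  simp only [this]

lemma contDiff_Pd (g : H3 → ℂ) (hg : ContDiff ℝ (⊤ : ℕ∞) g) : ContDiff ℝ (⊤ : ℕ∞) (Pd g) := by
  have : Pd g = fun x => fderiv ℝ g x (1, 0, 0) :=
    funext fun x => Pd_eq g (hg.differentiable (by simp)) x
  rw [this]
  exact (hg.fderiv_right (by simp)).clm_apply contDiff_const

lemma contDiff_Sd (g : H3 → ℂ) (hg : ContDiff ℝ (⊤ : ℕ∞) g) : ContDiff ℝ (⊤ : ℕ∞) (Sd g) := by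
  have : Sd g = fun x => fderiv ℝ g x (0, 0, 1) :=
    funext fun x => Sd_eq g (hg.differentiable (by simp)) x
  rw [this]
  exact (hg.fderiv_right (by simp)).clm_apply contDiff_const

lemma contDiff_Qd (g : H3 → ℂ) (hg : ContDiff ℝ (⊤ : ℕ∞) g) : ContDiff ℝ (⊤ : ℕ∞) (Qd g) := by
  have : Qd g = fun x => fderiv ℝ g x (0, 1, 0) + (x.1 : ℂ) * fderiv ℝ g x (0, 0, 1) :=
    funext fun x => Qd_eq g (hg.differentiable (by simp)) x
  rw [this]
  exact ((hg.fderiv_right (by simp)).clm_apply contDiff_const).add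
    ((Complex.ofRealCLM.contDiff.comp contDiff_fst).mul
      ((hg.fderiv_right (by simp)).clm_apply contDiff_const))

lemma hasDerivAt_Ucurve1 (A B q s p : ℝ) :
    HasDerivAt (fun p => Uab A B (p, q, s))
      ((A, B, A * B * p + (A ^ 2 - B ^ 2 - 1) / 2 * q) : H3) p := by
  have h1 : HasDerivAt (fun p : ℝ => A * p - B * q) A p := by
    simpa using ((hasDerivAt_id p).const_mul A).sub_const (B * q)
  have h2 : HasDerivAt (fun p : ℝ => B * p + A * q) B p := by
    simpa using ((hasDerivAt_id p).const_mul B).add_const (A * q)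
  have h3 : HasDerivAt
      (fun p : ℝ => s + (1 / 2) * (A * B * (p ^ 2 - q ^ 2) + (A ^ 2 - B ^ 2 - 1) * p * q))
      (A * B * p + (A ^ 2 - B ^ 2 - 1) / 2 * q) p := by
    have hp2 : HasDerivAt (fun p : ℝ => p ^ 2) (2 * p) p := by
      simpa using hasDerivAt_pow 2 p
    have := ((((hp2.sub_const (q ^ 2)).const_mul (A * B)).add
      (((hasDerivAt_id p).const_mul (A ^ 2 - B ^ 2 - 1)).mul_const q)).const_mul
        (1 / 2)).const_add s
    exact this.congr_deriv (by ring)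
  exact h1.prodMk (h2.prodMk h3)

lemma hasDerivAt_Ucurve2 (A B p s q : ℝ) :
    HasDerivAt (fun q => Uab A B (p, q, s))
      ((-B, A, -(A * B) * q + (A ^ 2 - B ^ 2 - 1) / 2 * p) : H3) q := by
  have h1 : HasDerivAt (fun q : ℝ => A * p - B * q) (-B) q := by
    exact ((hasDerivAt_const q (A * p)).sub ((hasDerivAt_id q).const_mul B)).congr_deriv (by ring)
  have h2 : HasDerivAt (fun q : ℝ => B * p + A * q) A q := by
    exact ((hasDerivAt_const q (B * p)).add ((hasDerivAt_id q).const_mul A)).congr_deriv (by ring)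
  have h3 : HasDerivAt
      (fun q : ℝ => s + (1 / 2) * (A * B * (p ^ 2 - q ^ 2) + (A ^ 2 - B ^ 2 - 1) * p * q))
      (-(A * B) * q + (A ^ 2 - B ^ 2 - 1) / 2 * p) q := by
    have hq2 : HasDerivAt (fun q : ℝ => q ^ 2) (2 * q) q := by
      simpa using hasDerivAt_pow 2 q
    have := (((((hasDerivAt_const q (p ^ 2)).sub hq2).const_mul (A * B)).add
      (((hasDerivAt_id q).const_mul ((A ^ 2 - B ^ 2 - 1) * p)))).const_mul
        (1 / 2)).const_add s
    simp only [id_eq] at this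
    exact this.congr_deriv (by ring)
  exact h1.prodMk (h2.prodMk h3)

lemma hasDerivAt_Ucurve3 (A B p q s : ℝ) :
    HasDerivAt (fun s => Uab A B (p, q, s)) (((0 : ℝ), (0 : ℝ), (1 : ℝ)) : H3) s := by
  have h3 : HasDerivAt
      (fun s : ℝ => s + (1 / 2) * (A * B * (p ^ 2 - q ^ 2) + (A ^ 2 - B ^ 2 - 1) * p * q))
      1 s := by
    simpa using (hasDerivAt_id s).add_const
      ((1 / 2) * (A * B * (p ^ 2 - q ^ 2) + (A ^ 2 - B ^ 2 - 1) * p * q))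
  exact (hasDerivAt_const s (A * p - B * q)).prodMk
    ((hasDerivAt_const s (B * p + A * q)).prodMk h3)

lemma smul_decomp (a b c : ℝ) :
    ((a, b, c) : H3) = a • ((1:ℝ), (0:ℝ), (0:ℝ)) + b • ((0:ℝ), (1:ℝ), (0:ℝ))
      + c • ((0:ℝ), (0:ℝ), (1:ℝ)) := by
  simp [Prod.ext_iff]

lemma Pd_comp (A B : ℝ) (hAB : A ^ 2 + B ^ 2 = 1) (g : H3 → ℂ) (hg : Differentiable ℝ g)
    (x : H3) :
    Pd (g ∘ Uab A B) x = (A : ℂ) * Pd g (Uab A B x) + (B : ℂ) * Qd g (Uab A B x) := by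
  have hx : ((x.1, x.2.1, x.2.2) : H3) = x := by simp
  have hc := hasDerivAt_Ucurve1 A B x.2.1 x.2.2 x.1
  have hd := (hg (Uab A B (x.1, x.2.1, x.2.2))).hasFDerivAt.comp_hasDerivAt x.1 hc
  rw [hx] at hd
  have hL : Pd (g ∘ Uab A B) x
      = fderiv ℝ g (Uab A B x) (A, B, A * B * x.1 + (A ^ 2 - B ^ 2 - 1) / 2 * x.2.1) :=
    hd.deriv
  rw [hL, smul_decomp, map_add, map_add, map_smul, map_smul, map_smul,
    Pd_eq g hg, Qd_eq g hg]
  have h1 : (Uab A B x).1 = A * x.1 - B * x.2.1 := by simp [Uab]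
  rw [h1]
  have hABc : (A : ℂ) ^ 2 + (B : ℂ) ^ 2 = 1 := by exact_mod_cast hAB
  simp only [Complex.real_smul]
  push_cast
  set z1 := fderiv ℝ g (Uab A B x) (1, 0, 0)
  set z2 := fderiv ℝ g (Uab A B x) (0, 1, 0)
  set z3 := fderiv ℝ g (Uab A B x) (0, 0, 1)
  linear_combination ((x.2.1 : ℂ) / 2 * z3) * hABc

lemma Sd_comp (A B : ℝ) (g : H3 → ℂ) (hg : Differentiable ℝ g) (x : H3) :
    Sd (g ∘ Uab A B) x = Sd g (Uab A B x) := by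
  have hx : ((x.1, x.2.1, x.2.2) : H3) = x := by simp
  have hc := hasDerivAt_Ucurve3 A B x.1 x.2.1 x.2.2
  have hd := (hg (Uab A B (x.1, x.2.1, x.2.2))).hasFDerivAt.comp_hasDerivAt x.2.2 hc
  rw [hx] at hd
  have hL : Sd (g ∘ Uab A B) x = fderiv ℝ g (Uab A B x) (0, 0, 1) := hd.deriv
  rw [hL, Sd_eq g hg]

lemma Qd_comp (A B : ℝ) (hAB : A ^ 2 + B ^ 2 = 1) (g : H3 → ℂ) (hg : Differentiable ℝ g)
    (x : H3) :
    Qd (g ∘ Uab A B) x = -(B : ℂ) * Pd g (Uab A B x) + (A : ℂ) * Qd g (Uab A B x) := by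
  have hx : ((x.1, x.2.1, x.2.2) : H3) = x := by simp
  have hc := hasDerivAt_Ucurve2 A B x.1 x.2.2 x.2.1
  have hd := (hg (Uab A B (x.1, x.2.1, x.2.2))).hasFDerivAt.comp_hasDerivAt x.2.1 hc
  rw [hx] at hd
  have hq : deriv (fun q => (g ∘ Uab A B) (x.1, q, x.2.2)) x.2.1
      = fderiv ℝ g (Uab A B x)
        (-B, A, -(A * B) * x.2.1 + (A ^ 2 - B ^ 2 - 1) / 2 * x.1) := hd.deriv
  rw [Qd, hq, Sd_comp A B g hg x, smul_decomp, map_add, map_add, map_smul, map_smul,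
    map_smul, Pd_eq g hg, Qd_eq g hg, Sd_eq g hg]
  have h1 : (Uab A B x).1 = A * x.1 - B * x.2.1 := by simp [Uab]
  rw [h1]
  have hABc : (A : ℂ) ^ 2 + (B : ℂ) ^ 2 = 1 := by exact_mod_cast hAB
  simp only [Complex.real_smul]
  push_cast
  set z1 := fderiv ℝ g (Uab A B x) (1, 0, 0)
  set z2 := fderiv ℝ g (Uab A B x) (0, 1, 0)
  set z3 := fderiv ℝ g (Uab A B x) (0, 0, 1)
  linear_combination (-(x.1 : ℂ) / 2 * z3) * hABc

lemma Pd_lin (c d : ℂ) (g k : H3 → ℂ) (hg : Differentiable ℝ g) (hk : Differentiable ℝ k)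
    (x : H3) :
    Pd (fun y => c * g y + d * k y) x = c * Pd g x + d * Pd k x := by
  have hx : ((x.1, x.2.1, x.2.2) : H3) = x := by simp
  have h := ((hasDerivAt_sec1 g hg x.2.1 x.2.2 x.1).const_mul c).add
    ((hasDerivAt_sec1 k hk x.2.1 x.2.2 x.1).const_mul d)
  rw [hx] at h
  show deriv (fun p => c * g (p, x.2.1, x.2.2) + d * k (p, x.2.1, x.2.2)) x.1
    = c * Pd g x + d * Pd k x
  rw [show deriv (fun p => c * g (p, x.2.1, x.2.2) + d * k (p, x.2.1, x.2.2)) x.1 = _ from h.deriv, Pd_eq g hg, Pd_eq k hk]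

lemma Sd_lin (c d : ℂ) (g k : H3 → ℂ) (hg : Differentiable ℝ g) (hk : Differentiable ℝ k)
    (x : H3) :
    Sd (fun y => c * g y + d * k y) x = c * Sd g x + d * Sd k x := by
  have hx : ((x.1, x.2.1, x.2.2) : H3) = x := by simp
  have h := ((hasDerivAt_sec3 g hg x.1 x.2.1 x.2.2).const_mul c).add
    ((hasDerivAt_sec3 k hk x.1 x.2.1 x.2.2).const_mul d)
  rw [hx] at h
  show deriv (fun s => c * g (x.1, x.2.1, s) + d * k (x.1, x.2.1, s)) x.2.2
    = c * Sd g x + d * Sd k x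
  rw [show deriv (fun s => c * g (x.1, x.2.1, s) + d * k (x.1, x.2.1, s)) x.2.2 = _ from h.deriv, Sd_eq g hg, Sd_eq k hk]

lemma Qd_lin (c d : ℂ) (g k : H3 → ℂ) (hg : Differentiable ℝ g) (hk : Differentiable ℝ k)
    (x : H3) :
    Qd (fun y => c * g y + d * k y) x = c * Qd g x + d * Qd k x := by
  have hx : ((x.1, x.2.1, x.2.2) : H3) = x := by simp
  have h := ((hasDerivAt_sec2 g hg x.1 x.2.2 x.2.1).const_mul c).add
    ((hasDerivAt_sec2 k hk x.1 x.2.2 x.2.1).const_mul d)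
  rw [hx] at h
  have hL : deriv (fun q => c * g (x.1, q, x.2.2) + d * k (x.1, q, x.2.2)) x.2.1
      = c * fderiv ℝ g x (0, 1, 0) + d * fderiv ℝ k x (0, 1, 0) := h.deriv
  show deriv (fun q => c * g (x.1, q, x.2.2) + d * k (x.1, q, x.2.2)) x.2.1
      + (x.1 : ℂ) * Sd (fun y => c * g y + d * k y) x = c * Qd g x + d * Qd k x
  rw [hL, Sd_lin c d g k hg hk x, Qd_eq g hg, Qd_eq k hk, Sd_eq g hg, Sd_eq k hk]
  ring

/-- the Folland–Stein operator is invariant under unitary automorphisms. -/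
theorem FS_comp_unitary (A B : ℝ) (hAB : A ^ 2 + B ^ 2 = 1) (α : ℝ) (f : H3 → ℂ)
    (hf : ContDiff ℝ (⊤ : ℕ∞) f) :
    FS α (f ∘ Uab A B) = (FS α f) ∘ Uab A B := by
  have hfd : Differentiable ℝ f := hf.differentiable (by simp)
  have hPf : ContDiff ℝ (⊤ : ℕ∞) (Pd f) := contDiff_Pd f hf
  have hQf : ContDiff ℝ (⊤ : ℕ∞) (Qd f) := contDiff_Qd f hf
  have hPd : Differentiable ℝ (Pd f) := hPf.differentiable (by simp)
  have hQd : Differentiable ℝ (Qd f) := hQf.differentiable (by simp)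
  set hp : H3 → ℂ := fun z => (A : ℂ) * Pd f z + (B : ℂ) * Qd f z with hhp_def
  set hq : H3 → ℂ := fun z => -(B : ℂ) * Pd f z + (A : ℂ) * Qd f z with hhq_def
  have hhp : Differentiable ℝ hp := (hPd.const_mul _).add (hQd.const_mul _)
  have hhq : Differentiable ℝ hq := (hPd.const_mul _).add (hQd.const_mul _)
  have e1 : Pd (f ∘ Uab A B) = hp ∘ Uab A B :=
    funext fun z => Pd_comp A B hAB f hfd z
  have e2 : Qd (f ∘ Uab A B) = hq ∘ Uab A B :=
    funext fun z => Qd_comp A B hAB f hfd z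
  funext x
  set y := Uab A B x with hy
  have hPP : Pd (Pd (f ∘ Uab A B)) x
      = (A : ℂ) * ((A : ℂ) * Pd (Pd f) y + (B : ℂ) * Pd (Qd f) y)
        + (B : ℂ) * ((A : ℂ) * Qd (Pd f) y + (B : ℂ) * Qd (Qd f) y) := by
    rw [e1, Pd_comp A B hAB hp hhp x, hhp_def,
      Pd_lin _ _ _ _ hPd hQd, Qd_lin _ _ _ _ hPd hQd]
  have hQQ : Qd (Qd (f ∘ Uab A B)) x
      = -(B : ℂ) * (-(B : ℂ) * Pd (Pd f) y + (A : ℂ) * Pd (Qd f) y)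
        + (A : ℂ) * (-(B : ℂ) * Qd (Pd f) y + (A : ℂ) * Qd (Qd f) y) := by
    rw [e2, Qd_comp A B hAB hq hhq x, hhq_def,
      Pd_lin _ _ _ _ hPd hQd, Qd_lin _ _ _ _ hPd hQd]
  have hSS : Sd (f ∘ Uab A B) x = Sd f y := Sd_comp A B f hfd x
  have hABc : (A : ℂ) ^ 2 + (B : ℂ) ^ 2 = 1 := by exact_mod_cast hAB
  show FS α (f ∘ Uab A B) x = FS α f y
  rw [FS, FS, hPP, hQQ, hSS]
  set z1 := Pd (Pd f) y
  set z2 := Qd (Qd f) y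
  set z3 := Pd (Qd f) y
  set z4 := Qd (Pd f) y
  linear_combination (-(1 / 4 : ℂ) * (z1 + z2)) * hABc

end
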